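/- Let f : EuclideanSpace ℝ (Fin n) → ℝ be twice continuously differentiable, bounded below by f_low, with Hessian ∇²f Lipschitz continuous in operator norm. Consider iterates of the second-order IBO trust-region algorithm: sequences x_k, Δ_k with 0 < Δ_0 ≤ Δ_max, quadratic models m_k about x_k with data (c_k, g_k, H_k), H_k symmetric with ‖H_k‖ ≤ κ_H − 1 for some κ_H ≥ 1, each m_k fully quadratic for f in B(x_k, Δ_k) with constants κ_mf, κ_mg, κ_mh > 0 independent of k, and steps s_k with ‖s_k‖ ≤ Δ_k and m_k(x_k) − m_k(x_k + s_k) ≥ κ_s·max(‖g_k‖·min(Δ_k, ‖g_k‖/(‖H_k‖ + 1)), τ(H_k)·Δ_k²) for some κ_s ∈ (0, 1/2); with ρ_k := (f(x_k) − f(x_k + s_k))/(m_k(x_k) − m_k(x_k + s_k)) and σ^m_k := max(‖g_k‖, τ(H_k)), the updates are: if ρ_k ≥ η_S and σ^m_k ≥ μ_c·Δ_k then x_{k+1} = x_k + s_k and Δ_{k+1} = min(γ_inc·Δ_k, Δ_max); otherwise if ρ_k ≥ η_U and σ^m_k ≥ μ_c·Δ_k then x_{k+1} = x_k + s_k and Δ_{k+1}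 = Δ_k; otherwise x_{k+1} = x_k and Δ_{k+1} = γ_dec·Δ_k, where 0 < γ_dec < 1 < γ_inc, 0 < η_U ≤ η_S < 1, μ_c > 0. Set σ_k := max(‖∇f(x_k)‖, τ(∇²f(x_k))) and κ_σ := max(κ_mg·Δ_max, κ_mh). If ε > 0 and σ_k ≥ ε for all k = 0, …, K−1, then K ≤ log(Δ_0/Δ_min(ε))/log(1/γ_dec) + (1 + log(γ_inc)/log(1/γ_dec))·(1 + κ_σ/μ_c)·(f(x_0) − f_low)/(η_U·κ_s·min(ε·Δ_min(ε), ε·Δ_min(ε)²)), where Δ_min(ε) := min(Δ_0, γ_dec·ε/(max(2κ_mf·Δ_max/(κ_s·(1 − η_S)), κ_H, μ_c) + κ_σ), γ_dec·ε/(max(2κ_mf/(κ_s·(1 − η_S)), μ_c) + κ_σ), ε/((1 + κ_σ/μ_c)·κ_H)). -/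

import Mathlib

/-!
Comparing the fully quadratic model with `f` at `x_k` shows that the model criticality
`max(‖g_k‖, τ(H_k))` is at least `ε - κσ Δ_k`. When `Δ_k` is small compared with `ε`, the
sufficient-decrease condition makes the model decrease dominate the `O(Δ_k³)` model error, so the
iteration is very successful and the radius does not shrink; hence `Δ_k ≥ Δmin` throughout. Each
successful iteration then decreases `f` by at least `ηU κs min(ε Δmin, ε Δmin²) / (1 + κσ/μc)`,
which bounds their number through `f(x_0) - flow`. The radius grows by at most `γinc` on successful
and shrinks by `γdec` on unsuccessful iterations while staying above `Δmin`, which bounds the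
unsuccessful iterations by `log(Δ_0/Δmin)/log(1/γdec)` plus `log γinc/log(1/γdec)` times the
successful ones.
-/

open scoped RealInnerProductSpace
open Metric

noncomputable section

/-- Matrix–vector multiplication as a map on Euclidean space. -/
def mulVecE {n : ℕ} (H : Matrix (Fin n) (Fin n) ℝ) (v : EuclideanSpace ℝ (Fin n)) :
    EuclideanSpace ℝ (Fin n) :=
  (EuclideanSpace.equiv (Fin n) ℝ).symm (H.mulVec (EuclideanSpace.equiv (Fin n) ℝ v))

/-- Operator 2-norm of a matrix (the norm induced by the Euclidean vector norm). -/
def opNorm {n : ℕ} (H : Matrix (Fin n) (Fin n) ℝ) : ℝ :=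
  sSup {r : ℝ | ∃ v : EuclideanSpace ℝ (Fin n), ‖v‖ ≤ 1 ∧ r = ‖mulVecE H v‖}

/-- Quadratic model about `x` with data `(c, g, H)`. -/
def qm {n : ℕ} (x : EuclideanSpace ℝ (Fin n)) (c : ℝ) (g : EuclideanSpace ℝ (Fin n))
    (H : Matrix (Fin n) (Fin n) ℝ) (y : EuclideanSpace ℝ (Fin n)) : ℝ :=
  c + ⟪g, y - x⟫ + (1 / 2) * ⟪y - x, mulVecE H (y - x)⟫

/-- `m` is a fully linear model for `f` on the closed ball `B(x, Δ)`. -/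
def IsFullyLinear {n : ℕ} (f m : EuclideanSpace ℝ (Fin n) → ℝ)
    (x : EuclideanSpace ℝ (Fin n)) (Δ κmf κmg : ℝ) : Prop :=
  ∀ y ∈ closedBall x Δ,
    |m y - f y| ≤ κmf * Δ ^ 2 ∧ ‖gradient m y - gradient f y‖ ≤ κmg * Δ

/-- `m` is a fully quadratic model for `f` on the closed ball `B(x, Δ)`. -/
def IsFullyQuadratic {n : ℕ} (f m : EuclideanSpace ℝ (Fin n) → ℝ)
    (x : EuclideanSpace ℝ (Fin n)) (Δ κmf κmg κmh : ℝ) : Prop :=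
  ∀ y ∈ closedBall x Δ,
    |m y - f y| ≤ κmf * Δ ^ 3 ∧ ‖gradient m y - gradient f y‖ ≤ κmg * Δ ^ 2 ∧
      ‖fderiv ℝ (gradient m) y - fderiv ℝ (gradient f) y‖ ≤ κmh * Δ

/-- Smallest eigenvalue of a symmetric matrix: the minimum of `⟪u, H u⟫` over unit vectors. -/
def lambdaMin {n : ℕ} (H : Matrix (Fin n) (Fin n) ℝ) : ℝ :=
  sInf {r : ℝ | ∃ u : EuclideanSpace ℝ (Fin n), ‖u‖ = 1 ∧ r = ⟪u, mulVecE H u⟫}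

/-- `τ(H) = max(-λ_min(H), 0)`. -/
def tau {n : ℕ} (H : Matrix (Fin n) (Fin n) ℝ) : ℝ := max (-lambdaMin H) 0

/-- Hessian matrix of `f` at `x`. -/
def hessMat {n : ℕ} (f : EuclideanSpace ℝ (Fin n) → ℝ) (x : EuclideanSpace ℝ (Fin n)) :
    Matrix (Fin n) (Fin n) ℝ :=
  Matrix.of fun i j => fderiv ℝ (gradient f) x (EuclideanSpace.single j 1) i

/-- ℓ∞ operator norm of a matrix: the maximum absolute row sum. -/
def linftyNorm {m k : Type*} [Fintype m] [Fintype k] (A : Matrix m k ℝ) : ℝ :=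
  sSup (Set.range fun i => ∑ j, |A i j|)

lemma le_div_of_abs_sub_le {mx my fx fy e η : ℝ} (hx : |mx - fx| ≤ e) (hy : |my - fy| ≤ e)
    (hpos : 0 < mx - my) (hD : 2 * e ≤ (1 - η) * (mx - my)) : η ≤ (fx - fy) / (mx - my) := by
  rw [le_div_iff₀ hpos]
  linarith [abs_le.1 hx, abs_le.1 hy]

lemma div_one_add_div_le {ε κ μ Δ σ : ℝ} (hμ : 0 < μ) (hκ : 0 ≤ κ) (hμΔ : μ * Δ ≤ σ)
    (hσ : ε - κ * Δ ≤ σ) : ε / (1 + κ / μ) ≤ σ := by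
  rw [div_le_iff₀ (by positivity), mul_one_add, mul_div_assoc']
  have : κ * Δ ≤ σ * κ / μ := by
    rw [le_div_iff₀ hμ]
    nlinarith
  linarith

lemma mul_le_of_mul_lt_of_le_div {γ Δ b ε C κ σ : ℝ} (hγ : 0 < γ) (hC : 0 < C + κ)
    (hΔ : γ * Δ < b) (hb : b ≤ γ * ε / (C + κ)) (hσ : ε - κ * Δ ≤ σ) : C * Δ ≤ σ := by
  rw [mul_div_assoc] at hb
  have := (lt_div_iff₀ hC).1 (lt_of_mul_lt_mul_left (hΔ.trans_le hb) hγ.le)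
  linarith

lemma add_le_of_mul_le_of_mul_le_add {nS nU δ D A L a : ℝ} (hδ : 0 < δ) (hL : 0 < L) (ha : 0 ≤ a)
    (hS : nS * δ ≤ D) (hU : nU * L ≤ A + nS * a) :
    nS + nU ≤ A / L + (1 + a / L) * (D / δ) := by
  have hnS : nS ≤ D / δ := (le_div_iff₀ hδ).2 hS
  have hnU : nU ≤ A / L + nS * (a / L) := by
    rw [← le_div_iff₀ hL] at hU
    linarith [show (A + nS * a) / L = A / L + nS * (a / L) by ring]
  nlinarith [mul_le_mul_of_nonneg_right hnS (by positivity : 0 ≤ 1 + a / L)]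

lemma abs_inner_apply_self_le_opNorm {F : Type*} [NormedAddCommGroup F] [InnerProductSpace ℝ F]
    (T : F →L[ℝ] F) {u : F} (hu : ‖u‖ = 1) : |⟪u, T u⟫| ≤ ‖T‖ := by
  simpa [hu] using (abs_real_inner_le_norm u (T u)).trans
    (mul_le_mul_of_nonneg_left (T.le_opNorm u) (norm_nonneg u))

section Euclidean

variable {n : ℕ}

local notation "E" => EuclideanSpace ℝ (Fin n)
local notation "toCLM" => Matrix.toEuclideanCLM (𝕜 := ℝ) (n := Fin n)

lemma mulVecE_eq_toEuclideanCLM (H : Matrix (Fin n) (Fin n) ℝ) (v : E) :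
    mulVecE H v = toCLM H v :=
  rfl

lemma opNorm_nonneg (H : Matrix (Fin n) (Fin n) ℝ) : 0 ≤ opNorm H :=
  Real.sSup_nonneg <| by rintro _ ⟨v, -, rfl⟩; exact norm_nonneg _

lemma Matrix.IsSymm.inner_toEuclideanCLM_left {H : Matrix (Fin n) (Fin n) ℝ} (hH : H.IsSymm)
    (u v : E) : ⟪toCLM H u, v⟫ = ⟪u, toCLM H v⟫ :=
  Matrix.isSymmetric_toEuclideanLin_iff.mpr (Matrix.isHermitian_iff_isSymm.mpr hH) u v

lemma hasGradientAt_qm (x : E) (c : ℝ) (g : E) {H : Matrix (Fin n) (Fin n) ℝ} (hH : H.IsSymm)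
    (y : E) : HasGradientAt (qm x c g H) (g + mulVecE H (y - x)) y := by
  have hd : HasFDerivAt (fun z : E => z - x) (ContinuousLinearMap.id ℝ E) y :=
    (hasFDerivAt_id y).sub_const x
  have hq := ((hasFDerivAt_const c y).add ((hasFDerivAt_const g y).inner ℝ hd)).add
    ((hd.inner ℝ ((toCLM H).hasFDerivAt.comp y hd)).const_mul (1 / 2 : ℝ))
  rw [hasGradientAt_iff_hasFDerivAt]
  refine hq.congr_fderiv (ContinuousLinearMap.ext fun v => ?_)
  simp only [mulVecE_eq_toEuclideanCLM, add_apply, ContinuousLinearMap.coe_comp,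
    Function.comp_apply, fderivInnerCLM_apply, ContinuousLinearMap.prod_apply,
    ContinuousLinearMap.coe_id', id_eq, zero_apply, smul_apply,
    InnerProductSpace.toDual_apply_apply, inner_add_left, inner_zero_left, smul_eq_mul, zero_add]
  rw [← hH.inner_toEuclideanCLM_left, real_inner_comm _ v]
  ring

lemma gradient_qm (x : E) (c : ℝ) (g : E) {H : Matrix (Fin n) (Fin n) ℝ} (hH : H.IsSymm) :
    gradient (qm x c g H) = fun y => g + mulVecE H (y - x) :=
  funext fun y => (hasGradientAt_qm x c g hH y).gradient

lemma fderiv_gradient_qm (x : E) (c : ℝ) (g : E) {H : Matrix (Fin n) (Fin n) ℝ} (hH : H.IsSymm)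
    (y : E) : fderiv ℝ (gradient (qm x c g H)) y = toCLM H := by
  rw [gradient_qm x c g hH]
  exact (((toCLM H).hasFDerivAt.comp y ((hasFDerivAt_id y).sub_const x)).const_add g).fderiv

lemma toEuclideanCLM_hessMat (f : E → ℝ) (x : E) :
    toCLM (hessMat f x) = fderiv ℝ (gradient f) x := by
  refine ContinuousLinearMap.coe_injective
    ((EuclideanSpace.basisFun (Fin n) ℝ).toBasis.ext fun j => ?_)
  ext i
  simp [hessMat, EuclideanSpace.single]

lemma lambdaMin_le_inner (A : Matrix (Fin n) (Fin n) ℝ) {u : E} (hu : ‖u‖ = 1) :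
    lambdaMin A ≤ ⟪u, mulVecE A u⟫ := by
  refine csInf_le ⟨-‖toCLM A‖, ?_⟩ ⟨u, hu, rfl⟩
  rintro _ ⟨v, hv, rfl⟩
  exact neg_le_of_abs_le (abs_inner_apply_self_le_opNorm (toCLM A) hv)

lemma lambdaMin_le_lambdaMin_add_norm_sub (A B : Matrix (Fin n) (Fin n) ℝ) :
    lambdaMin A ≤ lambdaMin B + ‖toCLM A - toCLM B‖ := by
  have hquad : ∀ u : E, ‖u‖ = 1 →
      ⟪u, mulVecE A u⟫ ≤ ⟪u, mulVecE B u⟫ + ‖toCLM A - toCLM B‖ := fun u hu => by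
    have := le_of_abs_le (abs_inner_apply_self_le_opNorm (toCLM A - toCLM B) hu)
    rw [sub_apply, inner_sub_right] at this
    exact sub_le_iff_le_add'.mp this
  -- In dimension zero there are no unit vectors and both infima are `sInf ∅ = 0`.
  rcases Set.eq_empty_or_nonempty
    {r : ℝ | ∃ u : E, ‖u‖ = 1 ∧ r = ⟪u, mulVecE B u⟫} with hB | hB
  · have hA : {r : ℝ | ∃ u : E, ‖u‖ = 1 ∧ r = ⟪u, mulVecE A u⟫} = ∅ := by
      simp only [Set.eq_empty_iff_forall_notMem, Set.mem_ofPred_eq] at hB ⊢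
      exact fun _ ⟨u, hu, _⟩ => hB _ ⟨u, hu, rfl⟩
    rw [lambdaMin, lambdaMin, hA, hB, Real.sInf_empty, zero_add]
    exact norm_nonneg _
  · rw [← sub_le_iff_le_add]
    refine le_csInf hB ?_
    rintro _ ⟨u, hu, rfl⟩
    linarith [lambdaMin_le_inner A hu, hquad u hu]

lemma tau_le_tau_add_norm_sub (A B : Matrix (Fin n) (Fin n) ℝ) :
    tau B ≤ tau A + ‖toCLM A - toCLM B‖ := by
  have h := lambdaMin_le_lambdaMin_add_norm_sub A B
  unfold tau
  refine max_le ?_ (add_nonneg (le_max_right _ _) (norm_nonneg _))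
  linarith [le_max_left (-lambdaMin A) 0]

lemma IsFullyQuadratic.max_norm_gradient_tau_le {f : E → ℝ} {x g : E}
    {c Δ Δmax κmf κmg κmh : ℝ} {H : Matrix (Fin n) (Fin n) ℝ}
    (hFQ : IsFullyQuadratic f (qm x c g H) x Δ κmf κmg κmh) (hH : H.IsSymm) (hΔ : 0 ≤ Δ)
    (hΔmax : Δ ≤ Δmax) (hκmg : 0 ≤ κmg) :
    max ‖gradient f x‖ (tau (hessMat f x)) ≤ max ‖g‖ (tau H) + max (κmg * Δmax) κmh * Δ := by
  obtain ⟨-, hgrad, hhess⟩ := hFQ x (mem_closedBall_self hΔ)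
  rw [(hasGradientAt_qm x c g hH x).gradient, sub_self, mulVecE_eq_toEuclideanCLM, map_zero,
    add_zero] at hgrad
  rw [fderiv_gradient_qm x c g hH, ← toEuclideanCLM_hessMat] at hhess
  have hgΔ : κmg * Δ ^ 2 ≤ max (κmg * Δmax) κmh * Δ := by
    rw [sq, ← mul_assoc]
    exact mul_le_mul_of_nonneg_right
      ((mul_le_mul_of_nonneg_left hΔmax hκmg).trans (le_max_left _ _)) hΔ
  have hHΔ : κmh * Δ ≤ max (κmg * Δmax) κmh * Δ :=
    mul_le_mul_of_nonneg_right (le_max_right _ _) hΔ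
  refine max_le ?_ ?_
  · linarith [norm_le_insert' (gradient f x) g, norm_sub_rev g (gradient f x),
      le_max_left ‖g‖ (tau H)]
  · linarith [tau_le_tau_add_norm_sub H (hessMat f x), le_max_right ‖g‖ (tau H)]

lemma mul_min_le_of_decrease {g : E} {H : Matrix (Fin n) (Fin n) ℝ} {κs κH Δ r t D : ℝ}
    (hD : κs * max (‖g‖ * min Δ (‖g‖ / (opNorm H + 1))) (tau H * Δ ^ 2) ≤ D)
    (hκs : 0 ≤ κs) (hH : opNorm H + 1 ≤ κH) (hr : 0 ≤ r) (hrΔ : r ≤ Δ)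
    (ht : t ≤ max ‖g‖ (tau H)) (htr : κH * r ≤ t) :
    κs * min (t * r) (t * r ^ 2) ≤ D := by
  refine le_trans (mul_le_mul_of_nonneg_left ?_ hκs) hD
  rcases le_total (tau H) ‖g‖ with hτg | hgτ
  · rw [max_eq_left hτg] at ht
    have hpos : 0 < opNorm H + 1 := by linarith [opNorm_nonneg H]
    have hr' : r ≤ min Δ (‖g‖ / (opNorm H + 1)) :=
      le_min hrΔ ((le_div_iff₀ hpos).2 (by linarith [mul_le_mul_of_nonneg_left hH hr]))
    calc min (t * r) (t * r ^ 2) ≤ t * r := min_le_left _ _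
      _ ≤ ‖g‖ * min Δ (‖g‖ / (opNorm H + 1)) := mul_le_mul ht hr' hr (norm_nonneg g)
      _ ≤ _ := le_max_left _ _
  · rw [max_eq_right hgτ] at ht
    calc min (t * r) (t * r ^ 2) ≤ t * r ^ 2 := min_le_right _ _
      _ ≤ tau H * Δ ^ 2 :=
        mul_le_mul ht (pow_le_pow_left₀ hr hrΔ 2) (sq_nonneg r) ((norm_nonneg g).trans hgτ)
      _ ≤ _ := le_max_right _ _

lemma IsFullyQuadratic.le_ratio_of_mul_le {f m : E → ℝ} {x s g : E}
    {H : Matrix (Fin n) (Fin n) ℝ} {Δ Δmax κmf κmg κmh κs κH η μ : ℝ}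
    (hFQ : IsFullyQuadratic f m x Δ κmf κmg κmh) (hs : ‖s‖ ≤ Δ) (hΔ : 0 < Δ)
    (hΔmax : Δ ≤ Δmax) (hκmf : 0 ≤ κmf) (hκs : 0 < κs) (hη : η < 1) (hH : opNorm H + 1 ≤ κH)
    (hdec : κs * max (‖g‖ * min Δ (‖g‖ / (opNorm H + 1))) (tau H * Δ ^ 2) ≤ m x - m (x + s))
    (hσΔmax : max (max (2 * κmf * Δmax / (κs * (1 - η))) κH) μ * Δ ≤ max ‖g‖ (tau H))
    (hσ : max (2 * κmf / (κs * (1 - η))) μ * Δ ≤ max ‖g‖ (tau H)) :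
    η ≤ (f x - f (x + s)) / (m x - m (x + s)) ∧ μ * Δ ≤ max ‖g‖ (tau H) := by
  set σ := max ‖g‖ (tau H)
  have hβ : 0 < κs * (1 - η) := mul_pos hκs (sub_pos.2 hη)
  have hle {a b : ℝ} (hab : a ≤ b) (hb : b * Δ ≤ σ) : a * Δ ≤ σ :=
    (mul_le_mul_of_nonneg_right hab hΔ.le).trans hb
  have hκH : κH * Δ ≤ σ := hle ((le_max_right _ _).trans (le_max_left _ _)) hσΔmax
  have h₁ : 2 * κmf * Δmax * Δ ≤ σ * (κs * (1 - η)) := by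
    rw [← div_le_iff₀ hβ, mul_div_right_comm]
    exact hle ((le_max_left _ _).trans (le_max_left _ _)) hσΔmax
  have h₂ : 2 * κmf * Δ ≤ σ * (κs * (1 - η)) := by
    rw [← div_le_iff₀ hβ, mul_div_right_comm]
    exact hle (le_max_left _ _) hσ
  have hmodel := mul_min_le_of_decrease hdec hκs.le hH hΔ.le le_rfl le_rfl hκH
  have hσpos : 0 < σ := (mul_pos (by linarith [opNorm_nonneg H]) hΔ).trans_le hκH
  -- Twice the model error `κmf Δ³` is at most a `(1 - η)`-fraction of the model decrease.
  have hcube : 2 * (κmf * Δ ^ 3) ≤ κs * (1 - η) * min (σ * Δ) (σ * Δ ^ 2) := by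
    rw [mul_min_of_nonneg _ _ hβ.le]
    refine le_min ?_ ?_
    · nlinarith [mul_le_mul_of_nonneg_right h₁ hΔ.le,
        mul_le_mul_of_nonneg_left hΔmax (by positivity : 0 ≤ 2 * κmf * Δ ^ 2)]
    · nlinarith [mul_le_mul_of_nonneg_right h₂ (sq_nonneg Δ)]
  have hmem : x + s ∈ closedBall x Δ := by rwa [mem_closedBall, dist_self_add_left]
  refine ⟨le_div_of_abs_sub_le (hFQ x (mem_closedBall_self hΔ.le)).1 (hFQ (x + s) hmem).1
    (lt_of_lt_of_le (by positivity) hmodel) ?_, hle (le_max_right _ _) hσ⟩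
  nlinarith [mul_le_mul_of_nonneg_left hmodel (sub_pos.2 hη).le]

lemma div_le_sub_of_le_ratio {f m : E → ℝ} {x s g : E} {H : Matrix (Fin n) (Fin n) ℝ}
    {Δ Δmin κs κH ε κσ μ η : ℝ}
    (hdec : κs * max (‖g‖ * min Δ (‖g‖ / (opNorm H + 1))) (tau H * Δ ^ 2) ≤ m x - m (x + s))
    (hκs : 0 < κs) (hH : opNorm H + 1 ≤ κH) (hε : 0 < ε) (hμ : 0 < μ) (hκσ : 0 ≤ κσ)
    (hη : η ≤ (f x - f (x + s)) / (m x - m (x + s))) (hη0 : 0 ≤ η)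
    (hμΔ : μ * Δ ≤ max ‖g‖ (tau H)) (hσ : ε - κσ * Δ ≤ max ‖g‖ (tau H))
    (hΔmin : 0 < Δmin) (hΔminΔ : Δmin ≤ Δ) (hΔminε : Δmin ≤ ε / ((1 + κσ / μ) * κH)) :
    η * κs * min (ε * Δmin) (ε * Δmin ^ 2) / (1 + κσ / μ) ≤ f x - f (x + s) := by
  have hc : 0 < 1 + κσ / μ := by positivity
  have hκH : 0 < κH := by linarith [opNorm_nonneg H]
  have hmodel := mul_min_le_of_decrease hdec hκs.le hH hΔmin.le hΔminΔ
    (div_one_add_div_le hμ hκσ hμΔ hσ)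
    (by rwa [mul_comm, ← le_div_iff₀ hκH, ← div_mul_eq_div_div])
  rw [div_mul_eq_mul_div, div_mul_eq_mul_div, min_div_div_right hc.le] at hmodel
  have hD : 0 < m x - m (x + s) := lt_of_lt_of_le (by positivity) hmodel
  rw [le_div_iff₀ hD] at hη
  calc η * κs * min (ε * Δmin) (ε * Δmin ^ 2) / (1 + κσ / μ)
      = η * (κs * (min (ε * Δmin) (ε * Δmin ^ 2) / (1 + κσ / μ))) := by ring
    _ ≤ η * (m x - m (x + s)) := mul_le_mul_of_nonneg_left hmodel hη0
    _ ≤ f x - f (x + s) := hη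

end Euclidean

lemma forall_le_of_mul_le_succ {u : ℕ → ℝ} {γ b : ℝ} {K : ℕ} (h0 : b ≤ u 0)
    (hshrink : ∀ k < K, γ * u k ≤ u (k + 1)) (hgrow : ∀ k < K, γ * u k < b → u k ≤ u (k + 1)) :
    ∀ k ≤ K, b ≤ u k := by
  intro k hk
  induction k with
  | zero => exact h0
  | succ k ih =>
    have hk' : k < K := hk
    rcases lt_or_ge (γ * u k) b with hsmall | hlarge
    · exact (ih hk'.le).trans (hgrow k hk' hsmall)
    · exact hlarge.trans (hshrink k hk')

open Finset in
lemma sub_le_card_filter_mul_add (u : ℕ → ℝ) (p : ℕ → Prop) [DecidablePred p] {a b : ℝ}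
    {K : ℕ} (ha : ∀ k < K, p k → u (k + 1) - u k ≤ a)
    (hb : ∀ k < K, ¬p k → u (k + 1) - u k ≤ b) :
    u K - u 0 ≤ #{k ∈ range K | p k} * a + #{k ∈ range K | ¬p k} * b := by
  rw [← sum_range_sub u K, ← sum_filter_add_sum_filter_not (range K) p, ← nsmul_eq_mul,
    ← nsmul_eq_mul]
  refine add_le_add (sum_le_card_nsmul _ _ _ fun k hk => ?_)
    (sum_le_card_nsmul _ _ _ fun k hk => ?_)
  · rw [mem_filter, mem_range] at hk
    exact ha k hk.1 hk.2
  · rw [mem_filter, mem_range] at hk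
    exact hb k hk.1 hk.2

section TrustRegion

variable {α : Type*} [Add α]

structure TrustRegionUpdate (x s : ℕ → α) (Δ : ℕ → ℝ) (pVS pS : ℕ → Prop)
    (γdec γinc Δmax : ℝ) : Prop where
  verySuccessful : ∀ k, pVS k → x (k + 1) = x k + s k ∧ Δ (k + 1) = min (γinc * Δ k) Δmax
  successful : ∀ k, ¬pVS k → pS k → x (k + 1) = x k + s k ∧ Δ (k + 1) = Δ k
  unsuccessful : ∀ k, ¬pS k → x (k + 1) = x k ∧ Δ (k + 1) = γdec * Δ k

namespace TrustRegionUpdate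

variable {x s : ℕ → α} {Δ : ℕ → ℝ} {pVS pS : ℕ → Prop} {γdec γinc Δmax : ℝ}

lemma radius_le_max (h : TrustRegionUpdate x s Δ pVS pS γdec γinc Δmax) (hΔ : ∀ k, 0 ≤ Δ k)
    (hγdec : γdec ≤ 1) (hΔ0 : Δ 0 ≤ Δmax) (k : ℕ) : Δ k ≤ Δmax := by
  induction k with
  | zero => exact hΔ0
  | succ k ih =>
    by_cases hVS : pVS k
    · exact (h.verySuccessful k hVS).2.trans_le (min_le_right _ _)
    by_cases hS : pS k
    · exact (h.successful k hVS hS).2.trans_le ih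
    · rw [(h.unsuccessful k hS).2]
      nlinarith [hΔ k]

lemma mul_radius_le_radius_succ (h : TrustRegionUpdate x s Δ pVS pS γdec γinc Δmax) {k : ℕ}
    (hΔ : 0 ≤ Δ k) (hΔmax : Δ k ≤ Δmax) (hγdec : γdec ≤ 1) (hγinc : 1 ≤ γinc) :
    γdec * Δ k ≤ Δ (k + 1) := by
  have hdec : γdec * Δ k ≤ Δ k := mul_le_of_le_one_left hΔ hγdec
  by_cases hVS : pVS k
  · rw [(h.verySuccessful k hVS).2]
    exact le_min (hdec.trans (le_mul_of_one_le_left hΔ hγinc)) (hdec.trans hΔmax)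
  by_cases hS : pS k
  · exact hdec.trans_eq (h.successful k hVS hS).2.symm
  · exact (h.unsuccessful k hS).2.ge

lemma radius_le_radius_succ (h : TrustRegionUpdate x s Δ pVS pS γdec γinc Δmax) {k : ℕ}
    (hVS : pVS k) (hΔ : 0 ≤ Δ k) (hΔmax : Δ k ≤ Δmax) (hγinc : 1 ≤ γinc) :
    Δ k ≤ Δ (k + 1) := by
  rw [(h.verySuccessful k hVS).2]
  exact le_min (le_mul_of_one_le_left hΔ hγinc) hΔmax

lemma le_radius (h : TrustRegionUpdate x s Δ pVS pS γdec γinc Δmax) (hΔ : ∀ k, 0 ≤ Δ k)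
    (hΔmax : ∀ k, Δ k ≤ Δmax) (hγdec : γdec ≤ 1) (hγinc : 1 ≤ γinc) {b : ℝ} {K : ℕ}
    (h0 : b ≤ Δ 0) (hVS : ∀ k < K, γdec * Δ k < b → pVS k) : ∀ k ≤ K, b ≤ Δ k :=
  forall_le_of_mul_le_succ h0
    (fun k _ => h.mul_radius_le_radius_succ (hΔ k) (hΔmax k) hγdec hγinc)
    (fun k hk hsmall => h.radius_le_radius_succ (hVS k hk hsmall) (hΔ k) (hΔmax k) hγinc)

lemma step_of_successful (h : TrustRegionUpdate x s Δ pVS pS γdec γinc Δmax) {k : ℕ}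
    (hS : pS k) (hΔ : 0 ≤ Δ k) (hγinc : 1 ≤ γinc) :
    x (k + 1) = x k + s k ∧ Δ (k + 1) ≤ γinc * Δ k := by
  by_cases hVS : pVS k
  · obtain ⟨hx, hΔ'⟩ := h.verySuccessful k hVS
    exact ⟨hx, hΔ'.trans_le (min_le_left _ _)⟩
  · obtain ⟨hx, hΔ'⟩ := h.successful k hVS hS
    exact ⟨hx, hΔ'.trans_le (le_mul_of_one_le_left hΔ hγinc)⟩

open Finset in
lemma card_successful_mul_le (h : TrustRegionUpdate x s Δ pVS pS γdec γinc Δmax)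
    [DecidablePred pS] {φ : α → ℝ} {δ b : ℝ} {K : ℕ}
    (hdesc : ∀ k < K, pS k → δ ≤ φ (x k) - φ (x (k + 1))) (hb : ∀ y, b ≤ φ y) :
    #{k ∈ range K | pS k} * δ ≤ φ (x 0) - b := by
  have := sub_le_card_filter_mul_add (fun k => φ (x k)) pS (a := -δ) (b := 0)
    (fun k hk hS => by linarith [hdesc k hk hS])
    (fun k _ hS => by rw [(h.unsuccessful k hS).1, sub_self])
  linarith [hb (x K)]

open Finset in
lemma card_unsuccessful_mul_log_le (h : TrustRegionUpdate x s Δ pVS pS γdec γinc Δmax)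
    [DecidablePred pS] (hΔ : ∀ k, 0 < Δ k) (hγdec : 0 < γdec) (hγinc : 1 ≤ γinc) {b : ℝ}
    {K : ℕ} (hb : 0 < b) (hbK : b ≤ Δ K) :
    #{k ∈ range K | ¬pS k} * Real.log (1 / γdec) ≤
      Real.log (Δ 0 / b) + #{k ∈ range K | pS k} * Real.log γinc := by
  have := sub_le_card_filter_mul_add (fun k => Real.log (Δ k)) pS
    (a := Real.log γinc) (b := Real.log γdec) (K := K)
    (fun k _ hS => by
      rw [sub_le_iff_le_add, ← Real.log_mul (by positivity) (hΔ k).ne']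
      exact Real.log_le_log (hΔ _) (h.step_of_successful hS (hΔ k).le hγinc).2)
    (fun k _ hS => by
      rw [(h.unsuccessful k hS).2, Real.log_mul hγdec.ne' (hΔ k).ne', add_sub_cancel_right])
  rw [one_div, Real.log_inv, Real.log_div (hΔ 0).ne' hb.ne']
  linarith [Real.log_le_log hb hbK]

open Finset in
lemma iterations_le (h : TrustRegionUpdate x s Δ pVS pS γdec γinc Δmax) [DecidablePred pS]
    (hΔ : ∀ k, 0 < Δ k) (hγdec0 : 0 < γdec) (hγdec1 : γdec < 1) (hγinc : 1 ≤ γinc)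
    {φ : α → ℝ} {φlow δ b : ℝ} {K : ℕ} (hb : 0 < b) (hbK : b ≤ Δ K) (hδ : 0 < δ)
    (hdesc : ∀ k < K, pS k → δ ≤ φ (x k) - φ (x (k + 1))) (hlow : ∀ y, φlow ≤ φ y) :
    (K : ℝ) ≤ Real.log (Δ 0 / b) / Real.log (1 / γdec) +
      (1 + Real.log γinc / Real.log (1 / γdec)) * ((φ (x 0) - φlow) / δ) := by
  rw [← card_range K, ← card_filter_add_card_filter_not pS, Nat.cast_add]
  exact add_le_of_mul_le_of_mul_le_add hδ (Real.log_pos (one_lt_one_div hγdec0 hγdec1))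
    (Real.log_nonneg hγinc) (h.card_successful_mul_le hdesc hlow)
    (h.card_unsuccessful_mul_log_le hΔ hγdec0 hγinc hb hbK)

end TrustRegionUpdate

end TrustRegion

theorem ibo_second_order_complexity_general {n : ℕ}
    (f : EuclideanSpace ℝ (Fin n) → ℝ)
    (flow : ℝ) (hflow : ∀ y, flow ≤ f y)
    (x : ℕ → EuclideanSpace ℝ (Fin n)) (Δ : ℕ → ℝ) (hΔpos : ∀ k, 0 < Δ k)
    (Δmax : ℝ) (hΔ0max : Δ 0 ≤ Δmax)
    (cm : ℕ → ℝ) (g : ℕ → EuclideanSpace ℝ (Fin n))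
    (H : ℕ → Matrix (Fin n) (Fin n) ℝ) (hHsymm : ∀ k, (H k).IsSymm)
    (κH : ℝ) (hκH : 1 ≤ κH) (hHnorm : ∀ k, opNorm (H k) ≤ κH - 1)
    (m : ℕ → EuclideanSpace ℝ (Fin n) → ℝ)
    (hm : ∀ k y, m k y = qm (x k) (cm k) (g k) (H k) y)
    (κmf κmg κmh : ℝ) (hκmf : 0 < κmf) (hκmg : 0 < κmg)
    (hFQ : ∀ k, IsFullyQuadratic f (m k) (x k) (Δ k) κmf κmg κmh)
    (s : ℕ → EuclideanSpace ℝ (Fin n)) (hs : ∀ k, ‖s k‖ ≤ Δ k)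
    (κs : ℝ) (hκs : κs ∈ Set.Ioo (0 : ℝ) (1 / 2))
    (hdec : ∀ k, κs * max (‖g k‖ * min (Δ k) (‖g k‖ / (opNorm (H k) + 1)))
        (tau (H k) * Δ k ^ 2) ≤ m k (x k) - m k (x k + s k))
    (γdec γinc ηU ηS μc : ℝ)
    (hγdec0 : 0 < γdec) (hγdec1 : γdec < 1) (hγinc : 1 < γinc)
    (hηU : 0 < ηU) (hηS : ηS < 1) (hμc : 0 < μc)
    (ρ : ℕ → ℝ)
    (hρ : ∀ k, ρ k = (f (x k) - f (x k + s k)) / (m k (x k) - m k (x k + s k)))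
    (σm : ℕ → ℝ) (hσm : ∀ k, σm k = max ‖g k‖ (tau (H k)))
    (hVS : ∀ k, (ηS ≤ ρ k ∧ μc * Δ k ≤ σm k) →
      x (k + 1) = x k + s k ∧ Δ (k + 1) = min (γinc * Δ k) Δmax)
    (hS : ∀ k, ¬(ηS ≤ ρ k ∧ μc * Δ k ≤ σm k) → (ηU ≤ ρ k ∧ μc * Δ k ≤ σm k) →
      x (k + 1) = x k + s k ∧ Δ (k + 1) = Δ k)
    (hU : ∀ k, ¬(ηU ≤ ρ k ∧ μc * Δ k ≤ σm k) →
      x (k + 1) = x k ∧ Δ (k + 1) = γdec * Δ k)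
    (σ : ℕ → ℝ)
    (hσ : ∀ k, σ k = max ‖gradient f (x k)‖ (tau (hessMat f (x k))))
    (κσ : ℝ) (hκσ : κσ = max (κmg * Δmax) κmh)
    (ε : ℝ) (hε : 0 < ε) (K : ℕ)
    (hcrit : ∀ k < K, ε ≤ σ k)
    (Δmin : ℝ)
    (hΔmin : Δmin = min (Δ 0)
      (min (γdec * ε / (max (max (2 * κmf * Δmax / (κs * (1 - ηS))) κH) μc + κσ))
        (min (γdec * ε / (max (2 * κmf / (κs * (1 - ηS))) μc + κσ))
          (ε / ((1 + κσ / μc) * κH))))) :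
    (K : ℝ) ≤ Real.log (Δ 0 / Δmin) / Real.log (1 / γdec) +
      (1 + Real.log γinc / Real.log (1 / γdec)) *
        ((1 + κσ / μc) * (f (x 0) - flow) /
          (ηU * κs * min (ε * Δmin) (ε * Δmin ^ 2))) := by
  classical
  obtain ⟨hκs, -⟩ := hκs
  simp only [hσm] at hVS hS hU
  have hΔ : ∀ k, 0 ≤ Δ k := fun k => (hΔpos k).le
  have hTR : TrustRegionUpdate x s Δ _ _ γdec γinc Δmax := ⟨hVS, hS, hU⟩
  have hΔmax := hTR.radius_le_max hΔ hγdec1.le hΔ0max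
  have hHκ : ∀ k, opNorm (H k) + 1 ≤ κH := fun k => by linarith [hHnorm k]
  have hκσ0 : 0 ≤ κσ := hκσ ▸ (mul_nonneg hκmg.le ((hΔ 0).trans hΔ0max)).trans (le_max_left _ _)
  have hσm : ∀ k < K, ε - κσ * Δ k ≤ max ‖g k‖ (tau (H k)) := fun k hk => by
    have := (funext (hm k) ▸ hFQ k).max_norm_gradient_tau_le (hHsymm k) (hΔ k) (hΔmax k) hκmg.le
    linarith [hσ k ▸ hcrit k hk, hκσ ▸ this]
  have hC (a : ℝ) : 0 < max a μc + κσ :=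
    add_pos_of_pos_of_nonneg (hμc.trans_le (le_max_right _ _)) hκσ0
  obtain ⟨hmin0, hmin₁, hmin₂, hmin₃⟩ : Δmin ≤ Δ 0 ∧ _ ∧ _ ∧ _ := by
    simpa only [le_min_iff] using hΔmin.le
  have hΔmin0 : 0 < Δmin := hΔmin ▸ lt_min (hΔpos 0) (lt_min (div_pos (by positivity) (hC _))
    (lt_min (div_pos (by positivity) (hC _)) (by positivity)))
  -- Whenever `γdec * Δ k < Δmin` the iteration is very successful, so the radius stays `≥ Δmin`.
  have hΔmin_le := hTR.le_radius hΔ hΔmax hγdec1.le hγinc.le hmin0 fun k hk hsmall =>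
    (hρ k ▸ (hFQ k).le_ratio_of_mul_le (hs k) (hΔpos k) (hΔmax k) hκmf.le hκs hηS (hHκ k) (hdec k)
      (mul_le_of_mul_lt_of_le_div hγdec0 (hC _) hsmall hmin₁ (hσm k hk))
      (mul_le_of_mul_lt_of_le_div hγdec0 (hC _) hsmall hmin₂ (hσm k hk)))
  calc (K : ℝ) ≤ _ := hTR.iterations_le hΔpos hγdec0 hγdec1 hγinc.le hΔmin0 (hΔmin_le K le_rfl)
        (δ := ηU * κs * min (ε * Δmin) (ε * Δmin ^ 2) / (1 + κσ / μc)) (by positivity)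
        (fun k hk hk' => ?_) hflow
    _ = _ := by rw [div_div_eq_mul_div, mul_comm _ (1 + κσ / μc)]
  rw [(hTR.step_of_successful hk' (hΔ k) hγinc.le).1]
  exact div_le_sub_of_le_ratio (hdec k) hκs (hHκ k) hε hμc hκσ0 (hρ k ▸ hk'.1) hηU.le hk'.2
    (hσm k hk) hΔmin0 (hΔmin_le k hk.le) hmin₃

/-- Second-order worst-case complexity bound for the IBO trust-region method
(Theorem `thm_wcc_dfo_2`). -/
theorem ibo_second_order_complexity {n : ℕ}
    (f : EuclideanSpace ℝ (Fin n) → ℝ) (hf : ContDiff ℝ 2 f)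
    (flow : ℝ) (hflow : ∀ y, flow ≤ f y)
    (LH : NNReal) (hLip : LipschitzWith LH (fun y => fderiv ℝ (gradient f) y))
    (x : ℕ → EuclideanSpace ℝ (Fin n)) (Δ : ℕ → ℝ) (hΔpos : ∀ k, 0 < Δ k)
    (Δmax : ℝ) (hΔ0max : Δ 0 ≤ Δmax)
    (cm : ℕ → ℝ) (g : ℕ → EuclideanSpace ℝ (Fin n))
    (H : ℕ → Matrix (Fin n) (Fin n) ℝ) (hHsymm : ∀ k, (H k).IsSymm)
    (κH : ℝ) (hκH : 1 ≤ κH) (hHnorm : ∀ k, opNorm (H k) ≤ κH - 1)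
    (m : ℕ → EuclideanSpace ℝ (Fin n) → ℝ)
    (hm : ∀ k y, m k y = qm (x k) (cm k) (g k) (H k) y)
    (κmf κmg κmh : ℝ) (hκmf : 0 < κmf) (hκmg : 0 < κmg) (hκmh : 0 < κmh)
    (hFQ : ∀ k, IsFullyQuadratic f (m k) (x k) (Δ k) κmf κmg κmh)
    (s : ℕ → EuclideanSpace ℝ (Fin n)) (hs : ∀ k, ‖s k‖ ≤ Δ k)
    (κs : ℝ) (hκs : κs ∈ Set.Ioo (0 : ℝ) (1 / 2))
    (hdec : ∀ k, κs * max (‖g k‖ * min (Δ k) (‖g k‖ / (opNorm (H k) + 1)))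
        (tau (H k) * Δ k ^ 2) ≤ m k (x k) - m k (x k + s k))
    (γdec γinc ηU ηS μc : ℝ)
    (hγdec0 : 0 < γdec) (hγdec1 : γdec < 1) (hγinc : 1 < γinc)
    (hηU : 0 < ηU) (hηUS : ηU ≤ ηS) (hηS : ηS < 1) (hμc : 0 < μc)
    (ρ : ℕ → ℝ)
    (hρ : ∀ k, ρ k = (f (x k) - f (x k + s k)) / (m k (x k) - m k (x k + s k)))
    (σm : ℕ → ℝ) (hσm : ∀ k, σm k = max ‖g k‖ (tau (H k)))
    (hVS : ∀ k, (ηS ≤ ρ k ∧ μc * Δ k ≤ σm k) →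
      x (k + 1) = x k + s k ∧ Δ (k + 1) = min (γinc * Δ k) Δmax)
    (hS : ∀ k, ¬(ηS ≤ ρ k ∧ μc * Δ k ≤ σm k) → (ηU ≤ ρ k ∧ μc * Δ k ≤ σm k) →
      x (k + 1) = x k + s k ∧ Δ (k + 1) = Δ k)
    (hU : ∀ k, ¬(ηU ≤ ρ k ∧ μc * Δ k ≤ σm k) →
      x (k + 1) = x k ∧ Δ (k + 1) = γdec * Δ k)
    (σ : ℕ → ℝ)
    (hσ : ∀ k, σ k = max ‖gradient f (x k)‖ (tau (hessMat f (x k))))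
    (κσ : ℝ) (hκσ : κσ = max (κmg * Δmax) κmh)
    (ε : ℝ) (hε : 0 < ε) (K : ℕ)
    (hcrit : ∀ k < K, ε ≤ σ k)
    (Δmin : ℝ)
    (hΔmin : Δmin = min (Δ 0)
      (min (γdec * ε / (max (max (2 * κmf * Δmax / (κs * (1 - ηS))) κH) μc + κσ))
        (min (γdec * ε / (max (2 * κmf / (κs * (1 - ηS))) μc + κσ))
          (ε / ((1 + κσ / μc) * κH))))) :
    (K : ℝ) ≤ Real.log (Δ 0 / Δmin) / Real.log (1 / γdec) +
      (1 + Real.log γinc / Real.log (1 / γdec)) *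
        ((1 + κσ / μc) * (f (x 0) - flow) /
          (ηU * κs * min (ε * Δmin) (ε * Δmin ^ 2))) :=
  ibo_second_order_complexity_general f flow hflow x Δ hΔpos Δmax hΔ0max cm g H hHsymm κH hκH hHnorm
    m hm κmf κmg κmh hκmf hκmg hFQ s hs κs hκs hdec γdec γinc ηU ηS μc hγdec0 hγdec1 hγinc hηU hηS
    hμc ρ hρ σm hσm hVS hS hU σ hσ κσ hκσ ε hε K hcrit Δmin hΔmin
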